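/- For the nilpotent 2×2 matrix S₀ = [[0,1],[0,0]], the conformal range DW_BCK^ℝ(S₀) equals the elliptical disk {(x,z) : x²/(1/2) + (z+1/2)²/(1/4) ≤ 1}, equivalently x² + 2z² + 2z ≤ 0, whose boundary is an h-horocycle with asymptotic point (0,-1). -/

import Mathlib

/-!
Since `S₀ (z, w) = (w, 0)`, the point of `DW_BCK^ℝ(S₀)` given by `(z, w)` is
`(2 Re(z̄ w), -|z|²) / (|z|² + 2|w|²)`, at which `x² + 2z² + 2z` takes the value
`4 (Re(z̄ w)² - |z|²|w|²) / (|z|² + 2|w|²)² ≤ 0` (Cauchy–Schwarz). Conversely a point `(u, v)`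
of the disk is attained by any `(z, w)` with `|z|² = -v`, `|w|² = (1 + v)/2`, `Re(z̄ w) = u/2`,
which exists exactly because `(u/2)² ≤ |z|²|w|²` there. The boundary is the horocycle with
`c = 1`.
-/

/-- The conformal range (real Davis–Wielandt shell) in the BCK model. -/
noncomputable def DWR (A : Matrix (Fin 2) (Fin 2) ℂ) : Set (ℝ × ℝ) :=
  {p : ℝ × ℝ | ∃ x : EuclideanSpace ℂ (Fin 2), x ≠ 0 ∧
      p = (2 * (inner ℂ x (Matrix.toEuclideanLin A x) : ℂ).re /
            (‖Matrix.toEuclideanLin A x‖ ^ 2 + ‖x‖ ^ 2),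
           (‖Matrix.toEuclideanLin A x‖ ^ 2 - ‖x‖ ^ 2) /
            (‖Matrix.toEuclideanLin A x‖ ^ 2 + ‖x‖ ^ 2))}

open ComplexConjugate

local notation "S₀" => !![(0 : ℂ), 1; 0, 0]

lemma EuclideanSpace.norm_sq_fin_two {𝕜 : Type*} [RCLike 𝕜] (x : EuclideanSpace 𝕜 (Fin 2)) :
    ‖x‖ ^ 2 = ‖x 0‖ ^ 2 + ‖x 1‖ ^ 2 := by
  rw [EuclideanSpace.norm_sq_eq, Fin.sum_univ_two]

lemma EuclideanSpace.eq_zero_iff_fin_two {𝕜 : Type*} [RCLike 𝕜] (x : EuclideanSpace 𝕜 (Fin 2)) :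
    x = 0 ↔ x 0 = 0 ∧ x 1 = 0 := by
  constructor
  · rintro rfl; simp
  · rintro ⟨h0, h1⟩; ext i; fin_cases i <;> simp [h0, h1]

lemma toEuclideanLin_S0_apply (x : EuclideanSpace ℂ (Fin 2)) :
    Matrix.toEuclideanLin S₀ x = !₂[x 1, 0] := by
  ext i; fin_cases i <;> simp [Matrix.toLpLin_apply, dotProduct, Fin.sum_univ_two]

lemma mem_DWR_S0_iff {p : ℝ × ℝ} :
    p ∈ DWR S₀ ↔ ∃ z w : ℂ, (z ≠ 0 ∨ w ≠ 0) ∧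
      p = (2 * (conj z * w).re / (‖z‖ ^ 2 + 2 * ‖w‖ ^ 2), -‖z‖ ^ 2 / (‖z‖ ^ 2 + 2 * ‖w‖ ^ 2)) := by
  have hA (x : EuclideanSpace ℂ (Fin 2)) : ‖Matrix.toEuclideanLin S₀ x‖ ^ 2 = ‖x 1‖ ^ 2 := by
    simp [toEuclideanLin_S0_apply, EuclideanSpace.norm_sq_fin_two]
  have hinner (x : EuclideanSpace ℂ (Fin 2)) :
      inner ℂ x (Matrix.toEuclideanLin S₀ x) = conj (x 0) * x 1 := by
    simp [toEuclideanLin_S0_apply, PiLp.inner_apply, Fin.sum_univ_two, mul_comm]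
  simp only [DWR, Set.mem_ofPred_eq, hA, hinner, EuclideanSpace.norm_sq_fin_two]
  constructor
  · rintro ⟨x, hx, rfl⟩
    refine ⟨x 0, x 1, not_and_or.mp (mt (EuclideanSpace.eq_zero_iff_fin_two x).mpr hx), ?_⟩
    congr 1 <;> ring_nf
  · rintro ⟨z, w, hzw, rfl⟩
    refine ⟨!₂[z, w], fun h => ?_, ?_⟩
    · simp only [WithLp.toLp_eq_zero, Matrix.cons_eq_zero_iff, Matrix.zero_empty, and_true] at h
      tauto
    · simp only [Matrix.cons_val_zero, Matrix.cons_val_one, Matrix.cons_val_fin_one]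
      congr 1 <;> ring_nf

lemma Complex.re_conj_mul_sq_le (z w : ℂ) : (conj z * w).re ^ 2 ≤ ‖z‖ ^ 2 * ‖w‖ ^ 2 := by
  rw [← mul_pow, ← Complex.norm_conj z, ← norm_mul]
  exact sq_le_sq' (abs_le.mp (Complex.abs_re_le_norm _)).1 (Complex.re_le_norm _)

lemma exists_sqrt_mul_cos_eq {a b r : ℝ} (h : r ^ 2 ≤ a * b) :
    ∃ θ : ℝ, √(a * b) * Real.cos θ = r := by
  have hr : |r| ≤ √(a * b) := Real.abs_le_sqrt h
  rcases (Real.sqrt_nonneg (a * b)).eq_or_lt with h0 | hpos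
  · refine ⟨Real.pi / 2, ?_⟩
    rw [Real.cos_pi_div_two, mul_zero, eq_comm, ← abs_nonpos_iff, h0]
    exact hr
  · refine ⟨Real.arccos (r / √(a * b)), ?_⟩
    rw [Real.cos_arccos, mul_div_cancel₀ _ hpos.ne']
    · rw [le_div_iff₀ hpos]; linarith [neg_abs_le r]
    · rw [div_le_one hpos]; exact (le_abs_self r).trans hr

lemma Complex.exists_norm_sq_eq_re_conj_mul_eq {a b r : ℝ} (ha : 0 ≤ a) (hb : 0 ≤ b)
    (h : r ^ 2 ≤ a * b) : ∃ z w : ℂ, ‖z‖ ^ 2 = a ∧ ‖w‖ ^ 2 = b ∧ (conj z * w).re = r := by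
  obtain ⟨θ, hθ⟩ := exists_sqrt_mul_cos_eq h
  refine ⟨√a, √b * Complex.exp (θ * Complex.I), ?_, ?_, ?_⟩
  · simp [Real.sq_sqrt ha]
  · simp [Complex.norm_exp_ofReal_mul_I, Real.sq_sqrt hb]
  · rw [Complex.conj_ofReal, ← mul_assoc, ← Complex.ofReal_mul, Complex.re_ofReal_mul,
      Complex.exp_ofReal_mul_I_re, ← Real.sqrt_mul ha, hθ]

lemma quadric_at_shell_coords (a b r : ℝ) (h : a + 2 * b ≠ 0) :
    (2 * r / (a + 2 * b)) ^ 2 + 2 * (-a / (a + 2 * b)) ^ 2 + 2 * (-a / (a + 2 * b)) =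
      4 * (r ^ 2 - a * b) / (a + 2 * b) ^ 2 := by
  field_simp; ring

theorem DWR_S0_eq : DWR S₀ = {p : ℝ × ℝ | p.1 ^ 2 + 2 * p.2 ^ 2 + 2 * p.2 ≤ 0} := by
  ext ⟨u, v⟩
  rw [mem_DWR_S0_iff, Set.mem_ofPred_eq]
  constructor
  · rintro ⟨z, w, hzw, hp⟩
    have hd : 0 < ‖z‖ ^ 2 + 2 * ‖w‖ ^ 2 := by rcases hzw with h | h <;> positivity
    rw [Prod.mk.injEq] at hp
    rw [hp.1, hp.2, quadric_at_shell_coords _ _ _ hd.ne']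
    exact div_nonpos_of_nonpos_of_nonneg
      (by nlinarith [Complex.re_conj_mul_sq_le z w]) (sq_nonneg _)
  · intro h
    obtain ⟨z, w, hz, hw, hr⟩ := Complex.exists_norm_sq_eq_re_conj_mul_eq
      (a := -v) (b := (1 + v) / 2) (r := u / 2) (by nlinarith) (by nlinarith) (by nlinarith)
    refine ⟨z, w, ?_, ?_⟩
    · by_contra! h0
      simp only [h0.1, h0.2, norm_zero] at hz hw
      linarith
    · rw [hz, hw, hr]
      congr 1 <;> field_simp <;> ring

lemma ellipse_eq_quadric :
    {p : ℝ × ℝ | p.1 ^ 2 / (1 / 2) + (p.2 + 1 / 2) ^ 2 / (1 / 4) ≤ 1} =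
      {p : ℝ × ℝ | p.1 ^ 2 + 2 * p.2 ^ 2 + 2 * p.2 ≤ 0} := by
  ext p
  have : p.1 ^ 2 / (1 / 2) + (p.2 + 1 / 2) ^ 2 / (1 / 4) =
      2 * (p.1 ^ 2 + 2 * p.2 ^ 2 + 2 * p.2) + 1 := by
    ring
  rw [Set.mem_ofPred_eq, Set.mem_ofPred_eq, this]
  constructor <;> intro h <;> linarith

theorem DWR_S0 :
    DWR !![(0 : ℂ), 1; 0, 0] =
      {p : ℝ × ℝ | p.1 ^ 2 / (1 / 2) + (p.2 + 1 / 2) ^ 2 / (1 / 4) ≤ 1} ∧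
    DWR !![(0 : ℂ), 1; 0, 0] =
      {p : ℝ × ℝ | p.1 ^ 2 + 2 * p.2 ^ 2 + 2 * p.2 ≤ 0} ∧
    ∃ c : ℝ, 0 < c ∧
      {p : ℝ × ℝ | p.1 ^ 2 + 2 * p.2 ^ 2 + 2 * p.2 = 0} =
        {p : ℝ × ℝ | p.1 ^ 2 + p.2 ^ 2 - 1 + c * (p.2 + 1) ^ 2 = 0} := by
  refine ⟨DWR_S0_eq.trans ellipse_eq_quadric.symm, DWR_S0_eq, 1, one_pos, ?_⟩
  ext p
  rw [Set.mem_ofPred_eq, Set.mem_ofPred_eq]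
  ring_nf
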